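/- Let g be of type A_n with adapted ι satisfying both ι^{(k)} > ι^{(k+1)} and ι^{(k)} > ι^{(k-1)} for some 1 < k < n. Define Tab_{A,ι,k}[λ] = { [j₁,...,j_k]^A_{−P(k−1)} + ⟨λ,h_k⟩ : 1 ≤ j₁ < ⋯ < j_k ≤ n+1, j_k > k }. Then Tab_{A,ι,k}[λ] ∪ {0} is closed under all operators Ŝ_{m,j} (m ≥ 1, j ∈ I), and every element of Tab_{A,ι,k}[λ] is obtained from λ^{(k)} = [1,...,k−1,k+1]^A_{−P(k−1)} + ⟨λ,h_k⟩ by applying a finite sequence of operators Ŝ_{m,j}; hence Ξ_{ι,k}[λ] = Tab_{A,ι,k}[λ] ∪ {0}. -/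

import Mathlib

/-! Combinatorics of an adapted sequence `ι` for a classical Lie algebra, and the
column-tableau linear forms of Kanakubo–Nakashima in re-indexed coordinates `x_{m,j}`
(the coordinate for the `m`-th occurrence of the index `j` in `ι`). -/

noncomputable section

/-- First position `m ≥ 1` with `ι m ∈ {i, j}`. -/
def firstBoth (ι : ℕ → ℕ) (i j : ℕ) : ℕ := sInf {m | 1 ≤ m ∧ (ι m = i ∨ ι m = j)}

/-- `p_{i,j} = 1` if `i` occurs before `j` in `ι`, and `0` otherwise. -/
def pOf (ι : ℕ → ℕ) (i j : ℕ) : ℕ := if ι (firstBoth ι i j) = i then 1 else 0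

/-- `ι⁽ⁱ⁾`, the first position of `ι` at which `i` occurs. -/
def firstOcc (ι : ℕ → ℕ) (i : ℕ) : ℕ := sInf {m | 1 ≤ m ∧ ι m = i}

/-- `P(k) = p_{2,1} + p_{3,2} + ⋯ + p_{k,k-1}` (so `P 0 = P 1 = 0`). -/
def Pof (ι : ℕ → ℕ) (k : ℕ) : ℕ := ∑ i ∈ Finset.Icc 2 k, pOf ι i (i - 1)

/-- The condition that every index `1,…,n` occurs infinitely often in `ι` and
consecutive entries of `ι` differ. -/
def SeqCond (n : ℕ) (ι : ℕ → ℕ) : Prop :=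
  (∀ m, 1 ≤ m → 1 ≤ ι m ∧ ι m ≤ n) ∧
  (∀ m, 1 ≤ m → ι m ≠ ι (m + 1)) ∧
  (∀ i, 1 ≤ i → i ≤ n → ∀ N : ℕ, ∃ m, N < m ∧ ι m = i)

/-- `ι` is adapted to the type `A_n` Cartan matrix: for adjacent indices `i, j`, any two
consecutive members of the subsequence of `ι` consisting of `i`'s and `j`'s differ. -/
def AdaptedA (n : ℕ) (ι : ℕ → ℕ) : Prop :=
  ∀ i j : ℕ, 1 ≤ i → i ≤ n → 1 ≤ j → j ≤ n → (i = j + 1 ∨ j = i + 1) →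
    ∀ m m' : ℕ, 1 ≤ m → m < m' → (ι m = i ∨ ι m = j) → (ι m' = i ∨ ι m' = j) →
      (∀ r, m < r → r < m' → ι r ≠ i ∧ ι r ≠ j) → ι m ≠ ι m'

/-- Linear forms on `ℚ^∞`, presented by their coefficients in the re-indexed
coordinates `x_{m,j}`. -/
abbrev LinF : Type := ℤ × ℕ → ℚ

/-- The coordinate functional `x_{m,j}` (zero when `m ≤ 0`, `j = 0` or `j > n`). -/
def XT (n : ℕ) (m : ℤ) (j : ℕ) : LinF :=
  fun q => if q = (m, j) ∧ 1 ≤ m ∧ 1 ≤ j ∧ j ≤ n then 1 else 0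

/-- The box `⌈j⌉^A_s = x_{s+P(j),j} − x_{s+P(j−1)+1,j−1}` of type `A_n`. -/
def boxA (n : ℕ) (ι : ℕ → ℕ) (j : ℕ) (s : ℤ) : LinF :=
  XT n (s + (Pof ι j : ℤ)) j - XT n (s + (Pof ι (j - 1) : ℤ) + 1) (j - 1)

/-- The column tableau `[j₁,…,j_k]^A_s = Σ_{i=1}^k ⌈j_i⌉^A_{s+k−i}` (here `j` is
`0`-indexed: `j ⟨0⟩ = j₁, …`). -/
def tabA (n : ℕ) (ι : ℕ → ℕ) {k : ℕ} (j : Fin k → ℕ) (s : ℤ) : LinF :=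
  ∑ i : Fin k, boxA n ι (j i) (s + (k : ℤ) - 1 - ((i : ℕ) : ℤ))

/-- The Nakashima–Zelevinsky form `β_{m,j}` in re-indexed coordinates, for `ι` adapted
to a type `A` Cartan matrix:
`β_{m,j} = x_{m,j} + x_{m+1,j} − x_{m+p_{j−1,j},j−1} − x_{m+p_{j+1,j},j+1}`. -/
def betaA (n : ℕ) (ι : ℕ → ℕ) (m : ℤ) (j : ℕ) : LinF :=
  XT n m j + XT n (m + 1) j - XT n (m + (pOf ι (j - 1) j : ℤ)) (j - 1)
    - XT n (m + (pOf ι (j + 1) j : ℤ)) (j + 1)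

/-- Affine-linear forms: a constant term together with a linear form. -/
abbrev AffF : Type := ℚ × LinF

/-- The form `β⁽⁻⁾_{m,j}` in re-indexed coordinates: `β_{m−1,j}` when `m ≥ 2`, and the
`λ`-dependent form with constant term `−⟨h_j, λ⟩` when `m = 1`. -/
def betaMA (n : ℕ) (ι : ℕ → ℕ) (lam : ℕ → ℤ) (m : ℤ) (j : ℕ) : AffF :=
  ((if m = 1 then -(lam j : ℚ) else 0), betaA n ι (m - 1) j)

/-- The operator `Ŝ_{m,j}` of the polyhedral realization of `B(λ)` in re-indexed
coordinates. -/
def ShatA (n : ℕ) (ι : ℕ → ℕ) (lam : ℕ → ℤ) (m : ℤ) (j : ℕ) (φ : AffF) : AffF :=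
  if 0 < φ.2 (m, j) then φ - φ.2 (m, j) • (((0 : ℚ), betaA n ι m j) : AffF)
  else φ - φ.2 (m, j) • betaMA n ι lam m j

end

noncomputable section

/-- The set `Tab_{A,ι,k}[λ] = {[j₁,…,j_k]^A_{−P(k−1)} + ⟨λ,h_k⟩ :
1 ≤ j₁ < ⋯ < j_k ≤ n+1, j_k > k}` (columns are `0`-indexed, `a ↦ j_{a+1}`). -/
def TabAk (n : ℕ) (ι : ℕ → ℕ) (lam : ℕ → ℤ) (k : ℕ) : Set AffF :=
  {φ | ∃ j : Fin k → ℕ, StrictMono j ∧ (∀ i, 1 ≤ j i ∧ j i ≤ n + 1) ∧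
    (∀ i : Fin k, (i : ℕ) = k - 1 → k < j i) ∧
    φ = ((lam k : ℚ), tabA n ι j (-(Pof ι (k - 1) : ℤ)))}

/-- `λ⁽ᵏ⁾ = [1,…,k−1,k+1]^A_{−P(k−1)} + ⟨λ,h_k⟩`. -/
def lamTabA (n : ℕ) (ι : ℕ → ℕ) (lam : ℕ → ℤ) (k : ℕ) : AffF :=
  ((lam k : ℚ),
    tabA n ι (fun i : Fin k => if (i : ℕ) < k - 1 then (i : ℕ) + 1 else k + 1)
      (-(Pof ι (k - 1) : ℤ)))

/-- `Ξ_{ι,k}[λ]`: all functions obtained from `λ⁽ᵏ⁾` by finite sequences of the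
operators `Ŝ_{m,j}` (`m ≥ 1`, `j ∈ I`). -/
def XiTabk (n : ℕ) (ι : ℕ → ℕ) (lam : ℕ → ℤ) (k : ℕ) : Set AffF :=
  {φ | ∃ L : List (ℤ × ℕ), (∀ q ∈ L, 1 ≤ q.1 ∧ 1 ≤ q.2 ∧ q.2 ≤ n) ∧
    φ = L.foldr (fun q ψ => ShatA n ι lam q.1 q.2 ψ) (lamTabA n ι lam k)}

end

/-!
The hypotheses give `p_{k,k-1} = 0` and `p_{k+1,k} = 1`, i.e. `P(k) = P(k-1)` and
`P(k+1) = P(k-1) + 1`. For a column `T = [j₁,…,j_k]`, the coefficient of `x_{m,c}` in `T` is `1`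
when `c` occurs in `T`, `c + 1` does not, and `m` is the row of the box holding `c`; it is `-1` in
the mirror situation for `c + 1`; otherwise it is `0` (if both occur they are adjacent and cancel).
Since `⌈c+1⌉_t = ⌈c⌉_t - β_{t+P(c),c}`, the operator `Ŝ_{m,c}` therefore fixes `T`, raises the
entry `c` to `c + 1`, or lowers `c + 1` to `c`. The rows involved are positive, and the constant
`-⟨λ,h_c⟩` of `β⁽⁻⁾_{1,c}` enters only when the last box is lowered from `k + 1` to `k`: this
produces `[1,…,k]`, whose form is `x_{P(k)-P(k-1),k} = 0`, with constant
`⟨λ,h_k⟩ - ⟨λ,h_k⟩ = 0`. Conversely, every admissible column other than `[1,…,k-1,k+1]` is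
obtained by raising one entry of an admissible column with a smaller sum of entries.
-/

open Function

section Occurrences

variable {n : ℕ} {ι : ℕ → ℕ}

lemma firstOcc_spec (hseq : SeqCond n ι) {i : ℕ} (hi1 : 1 ≤ i) (hin : i ≤ n) :
    1 ≤ firstOcc ι i ∧ ι (firstOcc ι i) = i := by
  obtain ⟨m, hm, he⟩ := hseq.2.2 i hi1 hin 0
  have hne : {m | 1 ≤ m ∧ ι m = i}.Nonempty := ⟨m, by omega, he⟩
  exact Nat.sInf_mem hne

lemma firstBoth_spec (hseq : SeqCond n ι) {i : ℕ} (hi1 : 1 ≤ i) (hin : i ≤ n) (j : ℕ) :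
    1 ≤ firstBoth ι i j ∧ (ι (firstBoth ι i j) = i ∨ ι (firstBoth ι i j) = j) :=
  Nat.sInf_mem (s := {m | 1 ≤ m ∧ (ι m = i ∨ ι m = j)})
    ⟨firstOcc ι i, (firstOcc_spec hseq hi1 hin).1, Or.inl (firstOcc_spec hseq hi1 hin).2⟩

lemma pOf_eq_one_of_firstOcc_lt (hseq : SeqCond n ι) {i j : ℕ} (hi1 : 1 ≤ i) (hin : i ≤ n)
    (h : firstOcc ι i < firstOcc ι j) : pOf ι i j = 1 := by
  obtain ⟨hb1, hb | hb⟩ := firstBoth_spec hseq hi1 hin j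
  · simp [pOf, hb]
  · have hj : firstOcc ι j ≤ firstBoth ι i j := Nat.sInf_le ⟨hb1, hb⟩
    have hi : firstBoth ι i j ≤ firstOcc ι i :=
      Nat.sInf_le ⟨(firstOcc_spec hseq hi1 hin).1, Or.inl (firstOcc_spec hseq hi1 hin).2⟩
    omega

lemma pOf_add_pOf_swap (hseq : SeqCond n ι) {i j : ℕ} (hi1 : 1 ≤ i) (hin : i ≤ n)
    (hij : i ≠ j) : pOf ι i j + pOf ι j i = 1 := by
  have hswap : firstBoth ι j i = firstBoth ι i j := by simp only [firstBoth, or_comm]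
  rw [pOf, pOf, hswap]
  rcases (firstBoth_spec hseq hi1 hin j).2 with h | h <;> simp [h, hij, Ne.symm hij]

lemma Pof_succ {j : ℕ} (hj : 1 ≤ j) : Pof ι (j + 1) = Pof ι j + pOf ι (j + 1) j := by
  rw [Pof, Pof, Finset.sum_Icc_succ_top (by omega : 2 ≤ j + 1), Nat.add_sub_cancel]

lemma Pof_mono : Monotone (Pof ι) := fun _ _ h =>
  Finset.sum_le_sum_of_subset (Finset.Icc_subset_Icc_right h)

lemma Pof_add_le {a b : ℕ} (ha : 1 ≤ a) (h : a ≤ b) : Pof ι b + a ≤ Pof ι a + b := by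
  induction b, h using Nat.le_induction with
  | base => rfl
  | succ b hb ih =>
    have : pOf ι (b + 1) b ≤ 1 := by unfold pOf; split <;> omega
    rw [Pof_succ (by omega)]
    omega

lemma Pof_eq_Pof_sub_one (hseq : SeqCond n ι) {k : ℕ} (hk1 : 1 < k) (hkn : k ≤ n)
    (h : firstOcc ι (k - 1) < firstOcc ι k) : Pof ι k = Pof ι (k - 1) := by
  have hsum := pOf_add_pOf_swap hseq (i := k) (j := k - 1) (by omega) hkn (by omega)
  have hone := pOf_eq_one_of_firstOcc_lt hseq (by omega : 1 ≤ k - 1) (by omega) h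
  have hsucc := Pof_succ (ι := ι) (j := k - 1) (by omega)
  rw [Nat.sub_add_cancel (by omega)] at hsucc
  omega

end Occurrences

section Forms

variable {n : ℕ} {ι : ℕ → ℕ}

lemma XT_of_not_one_le {m : ℤ} (h : ¬ 1 ≤ m) (j : ℕ) : XT n m j = 0 := by
  funext q; exact if_neg (by tauto)

lemma XT_zero_right (m : ℤ) : XT n m 0 = 0 := by
  funext q; exact if_neg (by omega)

lemma boxA_succ (hseq : SeqCond n ι) {c : ℕ} (hc1 : 1 ≤ c) (hcn : c ≤ n) (t : ℤ) :
    boxA n ι (c + 1) t = boxA n ι c t - betaA n ι (t + Pof ι c) c := by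
  have hP : (Pof ι (c + 1) : ℤ) = Pof ι c + pOf ι (c + 1) c := by
    rw [Pof_succ hc1]; push_cast; rfl
  rw [boxA, boxA, betaA, Nat.add_sub_cancel, hP, ← add_assoc]
  obtain rfl | hc := eq_or_lt_of_le hc1
  · simp only [Nat.sub_self, XT_zero_right]
    abel
  · -- `c - 1` and `c` are distinct indices, so exactly one of them comes first in `ι`
    have hsum := pOf_add_pOf_swap hseq (i := c) (j := c - 1) (by omega) hcn (by omega)
    have hsucc := Pof_succ (ι := ι) (j := c - 1) (by omega)
    rw [Nat.sub_add_cancel hc1] at hsucc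
    have hrow : t + (Pof ι c : ℤ) + (pOf ι (c - 1) c : ℤ) = t + Pof ι (c - 1) + 1 := by
      have : (Pof ι c : ℤ) + pOf ι (c - 1) c = Pof ι (c - 1) + 1 := by exact_mod_cast (by omega)
      linarith
    rw [hrow]
    abel

end Forms

section Tableaux

variable {n : ℕ} {ι : ℕ → ℕ} {k : ℕ}

/-- The box at position `a` of the column `[j₁,…,j_k]_s` is `⌈j_{a+1}⌉_{s+k-1-a}`; when it holds
`c` its positive variable is `x_{tabRow ι k s a c, c}`. -/
noncomputable def tabRow (ι : ℕ → ℕ) (k : ℕ) (s : ℤ) (a c : ℕ) : ℤ := s + k - 1 - a + Pof ι c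

lemma tabA_update (j : Fin k → ℕ) (a : Fin k) (v : ℕ) (s : ℤ) :
    tabA n ι (update j a v) s
      = tabA n ι j s + (boxA n ι v (s + k - 1 - a) - boxA n ι (j a) (s + k - 1 - a)) := by
  have hrest : ∑ i ∈ Finset.univ.erase a, boxA n ι (update j a v i) (s + k - 1 - i)
      = ∑ i ∈ Finset.univ.erase a, boxA n ι (j i) (s + k - 1 - i) :=
    Finset.sum_congr rfl fun i hi => by rw [update_of_ne (Finset.ne_of_mem_erase hi)]
  rw [tabA, tabA, ← Finset.add_sum_erase _ _ (Finset.mem_univ a),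
    ← Finset.add_sum_erase _ _ (Finset.mem_univ a), hrest, update_self]
  abel

lemma tabA_update_succ (hseq : SeqCond n ι) (j : Fin k → ℕ) (a : Fin k)
    (hc1 : 1 ≤ j a) (hcn : j a ≤ n) (s : ℤ) :
    tabA n ι (update j a (j a + 1)) s = tabA n ι j s - betaA n ι (tabRow ι k s a (j a)) (j a) := by
  rw [tabA_update, boxA_succ hseq hc1 hcn, tabRow]
  abel

lemma tabA_succ (s : ℤ) :
    tabA n ι (fun i : Fin k => (i : ℕ) + 1) s = XT n (s + Pof ι k) k := by
  -- the boxes `⌈1⌉, …, ⌈k⌉` telescope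
  let g : ℕ → LinF := fun c => XT n (s + k - c + Pof ι c) c
  have hbox : ∀ i : Fin k, boxA n ι ((i : ℕ) + 1) (s + k - 1 - i) = g (i + 1) - g i := by
    intro i
    simp only [g, boxA, Nat.add_sub_cancel]
    congr 2 <;> push_cast <;> ring
  rw [tabA, Finset.sum_congr rfl fun i _ => hbox i,
    Fin.sum_univ_eq_sum_range (fun i => g (i + 1) - g i), Finset.sum_range_sub]
  simp [g, XT_zero_right]

lemma XT_apply {m : ℤ} {c : ℕ} (hm : 1 ≤ m) (hc1 : 1 ≤ c) (hcn : c ≤ n) (p : ℤ) (d : ℕ) :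
    XT n p d (m, c) = if d = c ∧ m = p then 1 else 0 := by
  simp only [XT, Prod.mk.injEq]
  split_ifs <;> grind

lemma boxA_apply_self {m : ℤ} {c : ℕ} (hm : 1 ≤ m) (hc1 : 1 ≤ c) (hcn : c ≤ n) (t : ℤ) :
    boxA n ι c t (m, c) = if m = t + Pof ι c then 1 else 0 := by
  rw [boxA, Pi.sub_apply, XT_apply hm hc1 hcn, XT_apply hm hc1 hcn]
  simp only [true_and, (Nat.sub_lt hc1 one_pos).ne, false_and, if_false, sub_zero]

lemma boxA_apply_succ {m : ℤ} {c : ℕ} (hm : 1 ≤ m) (hc1 : 1 ≤ c) (hcn : c ≤ n) (t : ℤ) :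
    boxA n ι (c + 1) t (m, c) = -if m = t + Pof ι c + 1 then 1 else 0 := by
  rw [boxA, Pi.sub_apply, XT_apply hm hc1 hcn, XT_apply hm hc1 hcn]
  simp

lemma boxA_apply_of_ne {m : ℤ} {c d : ℕ} (hc1 : 1 ≤ c) (hd : d ≠ c) (hd' : d ≠ c + 1) (t : ℤ) :
    boxA n ι d t (m, c) = 0 := by
  simp only [boxA, XT, Pi.sub_apply, Prod.mk.injEq]
  rw [if_neg (by omega), if_neg (by omega), sub_zero]

end Tableaux

section Columns

variable {k : ℕ} {j : Fin k → ℕ}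

lemma StrictMono.apply_add_sub_le (hj : StrictMono j) {a b : Fin k} (hab : a ≤ b) :
    j a + ((b : ℕ) - a) ≤ j b := by
  obtain ⟨b, hb⟩ := b
  induction b with
  | zero =>
    have : a = ⟨0, hb⟩ := Fin.ext (Nat.le_zero.mp hab)
    simp [this]
  | succ b ih =>
    rcases eq_or_lt_of_le hab with rfl | hlt
    · simp
    · have hstep := hj (show (⟨b, by omega⟩ : Fin k) < ⟨b + 1, hb⟩ from
        Fin.mk_lt_mk.mpr b.lt_succ_self)
      have := ih (by omega) (Fin.le_def.mpr (Nat.le_of_lt_succ hlt))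
      simp only at this hstep ⊢
      omega

lemma StrictMono.add_one_le_apply (hj : StrictMono j) (h1 : ∀ i, 1 ≤ j i) (a : Fin k) :
    (a : ℕ) + 1 ≤ j a := by
  have := hj.apply_add_sub_le (a := ⟨0, a.pos⟩) (b := a) (Fin.le_def.mpr (Nat.zero_le _))
  have := h1 ⟨0, a.pos⟩
  simp only [Nat.sub_zero] at *
  omega

lemma StrictMono.eq_add_one (hj : StrictMono j) (h1 : ∀ i, 1 ≤ j i) (hk : ∀ i, j i ≤ k) :
    j = fun i : Fin k => (i : ℕ) + 1 := by
  funext i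
  have hk1 : k - 1 < k := by have := i.isLt; omega
  have := hj.apply_add_sub_le (a := i) (b := ⟨k - 1, hk1⟩) (Fin.le_def.mpr (by simp; omega))
  have := hk ⟨k - 1, hk1⟩
  have := hj.add_one_le_apply h1 i
  simp only at *
  omega

lemma StrictMono.val_eq_add_one (hj : StrictMono j) {a b : Fin k} {c : ℕ} (ha : j a = c)
    (hb : j b = c + 1) : (b : ℕ) = a + 1 := by
  have hab : a < b := hj.lt_iff_lt.mp (by omega)
  have := hj.apply_add_sub_le hab.le
  have := Fin.lt_def.mp hab
  omega

lemma StrictMono.update (hj : StrictMono j) {a : Fin k} {v : ℕ} (hlt : ∀ i < a, j i < v)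
    (hgt : ∀ i, a < i → v < j i) : StrictMono (update j a v) := by
  intro x y hxy
  by_cases hx : x = a <;> by_cases hy : y = a
  · exact absurd hxy (by rw [hx, hy]; exact lt_irrefl a)
  · rw [hx, update_self, update_of_ne hy]
    exact hgt y (hx ▸ hxy)
  · rw [hy, update_self, update_of_ne hx]
    exact hlt x (hy ▸ hxy)
  · rw [update_of_ne hx, update_of_ne hy]
    exact hj hxy

end Columns

section Coefficients

variable {n : ℕ} {ι : ℕ → ℕ} {k : ℕ} {j : Fin k → ℕ} {m : ℤ} {c : ℕ}

lemma tabA_apply_of_eq (hj : Injective j) {a : Fin k} (ha : j a = c) (hc : ∀ i, j i ≠ c + 1)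
    (hm : 1 ≤ m) (hc1 : 1 ≤ c) (hcn : c ≤ n) (s : ℤ) :
    tabA n ι j s (m, c) = if m = tabRow ι k s a c then 1 else 0 := by
  rw [tabA, Finset.sum_apply, Fintype.sum_eq_single a, ha, boxA_apply_self hm hc1 hcn]
  · rfl
  · exact fun i hi => boxA_apply_of_ne hc1 (fun h => hi (hj (h.trans ha.symm))) (hc i) _

lemma tabA_apply_of_eq_succ (hj : Injective j) {b : Fin k} (hb : j b = c + 1)
    (hc : ∀ i, j i ≠ c) (hm : 1 ≤ m) (hc1 : 1 ≤ c) (hcn : c ≤ n) (s : ℤ) :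
    tabA n ι j s (m, c) = -if m = tabRow ι k s b c + 1 then 1 else 0 := by
  rw [tabA, Finset.sum_apply, Fintype.sum_eq_single b, hb, boxA_apply_succ hm hc1 hcn]
  · rfl
  · exact fun i hi => boxA_apply_of_ne hc1 (hc i) (fun h => hi (hj (h.trans hb.symm))) _

lemma tabA_apply_of_eq_of_eq_succ (hj : StrictMono j) {a b : Fin k} (ha : j a = c)
    (hb : j b = c + 1) (hm : 1 ≤ m) (hc1 : 1 ≤ c) (hcn : c ≤ n) (s : ℤ) :
    tabA n ι j s (m, c) = 0 := by
  -- `c` and `c + 1` sit in adjacent boxes, whose contributions to `x_{m,c}` cancel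
  have hrow : s + k - 1 - ((b : ℕ) : ℤ) + Pof ι c + 1 = s + k - 1 - ((a : ℕ) : ℤ) + Pof ι c := by
    rw [hj.val_eq_add_one ha hb]; push_cast; ring
  rw [tabA, Finset.sum_apply, Fintype.sum_eq_add a b (fun h => by subst h; omega), ha, hb,
    boxA_apply_self hm hc1 hcn, boxA_apply_succ hm hc1 hcn, hrow, add_neg_cancel]
  rintro i ⟨hia, hib⟩
  exact boxA_apply_of_ne hc1 (fun h => hia (hj.injective (h.trans ha.symm)))
    (fun h => hib (hj.injective (h.trans hb.symm))) _

lemma tabA_apply_of_forall_ne (hc : ∀ i, j i ≠ c) (hc' : ∀ i, j i ≠ c + 1) (hc1 : 1 ≤ c)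
    (s : ℤ) : tabA n ι j s (m, c) = 0 := by
  rw [tabA, Finset.sum_apply]
  exact Finset.sum_eq_zero fun i _ => boxA_apply_of_ne hc1 (hc i) (hc' i) _

lemma tabA_apply_eq_zero_or (hj : StrictMono j) (hm : 1 ≤ m) (hc1 : 1 ≤ c) (hcn : c ≤ n)
    (s : ℤ) :
    tabA n ι j s (m, c) = 0 ∨
      (∃ a, j a = c ∧ (∀ i, j i ≠ c + 1) ∧ m = tabRow ι k s a c) ∨
      (∃ b, j b = c + 1 ∧ (∀ i, j i ≠ c) ∧ m = tabRow ι k s b c + 1) := by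
  by_cases hA : ∃ a, j a = c <;> by_cases hB : ∃ b, j b = c + 1
  · obtain ⟨a, ha⟩ := hA
    obtain ⟨b, hb⟩ := hB
    exact Or.inl (tabA_apply_of_eq_of_eq_succ hj ha hb hm hc1 hcn s)
  · obtain ⟨a, ha⟩ := hA
    push Not at hB
    by_cases hrow : m = tabRow ι k s a c
    · exact Or.inr (Or.inl ⟨a, ha, hB, hrow⟩)
    · exact Or.inl (by rw [tabA_apply_of_eq hj.injective ha hB hm hc1 hcn, if_neg hrow])
  · obtain ⟨b, hb⟩ := hB
    push Not at hA
    by_cases hrow : m = tabRow ι k s b c + 1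
    · exact Or.inr (Or.inr ⟨b, hb, hA, hrow⟩)
    · exact Or.inl (by
        rw [tabA_apply_of_eq_succ hj.injective hb hA hm hc1 hcn, if_neg hrow, neg_zero])
  · push Not at hA hB
    exact Or.inl (tabA_apply_of_forall_ne hA hB hc1 s)

end Coefficients

section Operators

variable {n : ℕ} {ι : ℕ → ℕ} {lam : ℕ → ℤ} {m : ℤ} {c : ℕ}

lemma ShatA_of_apply_eq_zero {φ : AffF} (h : φ.2 (m, c) = 0) : ShatA n ι lam m c φ = φ := by
  simp [ShatA, h]

lemma ShatA_of_apply_eq_one {φ : AffF} (h : φ.2 (m, c) = 1) :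
    ShatA n ι lam m c φ = (φ.1, φ.2 - betaA n ι m c) := by
  refine Prod.ext ?_ ?_ <;> simp [ShatA, h]

lemma ShatA_of_apply_eq_neg_one {φ : AffF} (h : φ.2 (m, c) = -1) :
    ShatA n ι lam m c φ
      = (φ.1 + if m = 1 then -(lam c : ℚ) else 0, φ.2 + betaA n ι (m - 1) c) := by
  refine Prod.ext ?_ ?_ <;> norm_num [ShatA, h, betaMA, sub_eq_add_neg]

variable {k : ℕ} {j : Fin k → ℕ} {s : ℤ}

lemma ShatA_raise (hseq : SeqCond n ι) (hj : Injective j) {a : Fin k} (ha : j a = c)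
    (hc : ∀ i, j i ≠ c + 1) (hm : 1 ≤ tabRow ι k s a c) (hc1 : 1 ≤ c) (hcn : c ≤ n) (x : ℚ) :
    ShatA n ι lam (tabRow ι k s a c) c (x, tabA n ι j s)
      = (x, tabA n ι (update j a (c + 1)) s) := by
  have hcoeff : tabA n ι j s (tabRow ι k s a c, c) = 1 := by
    rw [tabA_apply_of_eq hj ha hc hm hc1 hcn, if_pos rfl]
  subst ha
  rw [ShatA_of_apply_eq_one hcoeff, tabA_update_succ hseq j a hc1 hcn]

lemma ShatA_lower (hseq : SeqCond n ι) (hj : Injective j) {b : Fin k} (hb : j b = c + 1)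
    (hc : ∀ i, j i ≠ c) (hm : 0 ≤ tabRow ι k s b c) (hc1 : 1 ≤ c) (hcn : c ≤ n) (x : ℚ) :
    ShatA n ι lam (tabRow ι k s b c + 1) c (x, tabA n ι j s)
      = (x + if tabRow ι k s b c + 1 = 1 then -(lam c : ℚ) else 0,
          tabA n ι (update j b c) s) := by
  have hcoeff : tabA n ι j s (tabRow ι k s b c + 1, c) = -1 := by
    rw [tabA_apply_of_eq_succ hj hb hc (by omega) hc1 hcn, if_pos rfl]
  have hup := tabA_update_succ hseq (update j b c) b (by rwa [update_self])
    (by rwa [update_self]) s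
  rw [update_self, update_idem, ← hb, update_eq_self] at hup
  rw [ShatA_of_apply_eq_neg_one hcoeff, hup, add_sub_cancel_right, sub_add_cancel]

end Operators

section TabColumns

variable {n k : ℕ} {ι : ℕ → ℕ} {lam : ℕ → ℤ} {j : Fin k → ℕ} {c : ℕ}

def IsTabColumn (n k : ℕ) (j : Fin k → ℕ) : Prop :=
  StrictMono j ∧ (∀ i, 1 ≤ j i ∧ j i ≤ n + 1) ∧ ∀ i : Fin k, (i : ℕ) = k - 1 → k < j i

lemma mem_TabAk {φ : AffF} : φ ∈ TabAk n ι lam k ↔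
    ∃ j, IsTabColumn n k j ∧ φ = ((lam k : ℚ), tabA n ι j (-(Pof ι (k - 1) : ℤ))) := by
  simp only [TabAk, IsTabColumn, Set.mem_ofPred_eq, and_assoc]

def lamCol (k : ℕ) (i : Fin k) : ℕ := if (i : ℕ) < k - 1 then (i : ℕ) + 1 else k + 1

lemma one_le_lamCol (i : Fin k) : 1 ≤ lamCol k i := by
  unfold lamCol; split_ifs <;> omega

lemma lamCol_strictMono : StrictMono (lamCol k) := by
  intro x y hxy
  have := Fin.lt_def.mp hxy
  have := y.isLt
  unfold lamCol
  split_ifs <;> omega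

lemma isTabColumn_lamCol (hkn : k ≤ n) : IsTabColumn n k (lamCol k) := by
  refine ⟨lamCol_strictMono, fun i => ⟨one_le_lamCol i, ?_⟩, fun i hi => ?_⟩ <;>
    unfold lamCol <;> split_ifs <;> omega

lemma IsTabColumn.lamCol_le (hj : IsTabColumn n k j) (i : Fin k) : lamCol k i ≤ j i := by
  unfold lamCol
  split_ifs
  · exact hj.1.add_one_le_apply (fun i => (hj.2.1 i).1) i
  · exact hj.2.2 i (by have := i.isLt; omega)

lemma IsTabColumn.update_of_strictMono (hj : IsTabColumn n k j) {a : Fin k} {v : ℕ}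
    (hmono : StrictMono (update j a v)) (hv : 1 ≤ v ∧ v ≤ n + 1)
    (hlast : (a : ℕ) = k - 1 → k < v) : IsTabColumn n k (update j a v) :=
  ⟨hmono, (forall_update_iff j fun _ v => 1 ≤ v ∧ v ≤ n + 1).2 ⟨hv, fun i _ => hj.2.1 i⟩,
    (forall_update_iff j fun i v => (i : ℕ) = k - 1 → k < v).2 ⟨hlast, fun i _ => hj.2.2 i⟩⟩

lemma IsTabColumn.update_succ (hj : IsTabColumn n k j) {a : Fin k} (ha : j a = c)
    (hc : ∀ i, j i ≠ c + 1) (hcn : c ≤ n) : IsTabColumn n k (update j a (c + 1)) := by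
  refine hj.update_of_strictMono (hj.1.update (fun i hi => ?_) fun i hi => ?_) (by omega)
    fun h => ?_
  · have := hj.1 hi; omega
  · have := hj.1 hi; have := hc i; omega
  · have := hj.2.2 a h; omega

lemma IsTabColumn.update_pred (hj : IsTabColumn n k j) {b : Fin k} (hb : j b = c + 1)
    (hc : ∀ i, j i ≠ c) (hc1 : 1 ≤ c) (hlast : (b : ℕ) = k - 1 → k < c) :
    IsTabColumn n k (update j b c) := by
  refine hj.update_of_strictMono (hj.1.update (fun i hi => ?_) fun i hi => ?_) ⟨hc1, ?_⟩ hlast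
  · have := hj.1 hi; have := hc i; omega
  · have := hj.1 hi; omega
  · have := hj.2.1 b; omega

lemma IsTabColumn.exists_update_pred (hj : IsTabColumn n k j) (hne : j ≠ lamCol k) :
    ∃ a, 2 ≤ j a ∧ IsTabColumn n k (update j a (j a - 1)) := by
  -- lower the first entry that exceeds the corresponding entry of `[1,…,k-1,k+1]`
  obtain ⟨a, ha, hmin⟩ := wellFounded_lt.has_min {i | j i ≠ lamCol k i} (Function.ne_iff.1 hne)
  have hlt : lamCol k a < j a := lt_of_le_of_ne (hj.lamCol_le a) (Ne.symm ha)
  have hbelow : ∀ i < a, j i = lamCol k i := fun i hi => not_not.1 fun h => hmin i h hi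
  have := one_le_lamCol a
  refine ⟨a, by omega, hj.update_pred (by omega) (fun i => ?_) (by omega) fun h => ?_⟩
  · rcases lt_trichotomy i a with hi | rfl | hi
    · rw [hbelow i hi]; have := lamCol_strictMono hi; omega
    · omega
    · have := hj.1 hi; omega
  · simp only [lamCol, h, lt_irrefl, if_false] at hlt
    omega

end TabColumns

section Rows

variable {n k : ℕ} {ι : ℕ → ℕ} {j : Fin k → ℕ}

lemma one_le_tabRow (hPk1 : Pof ι (k + 1) = Pof ι (k - 1) + 1) (hj : StrictMono j)
    (h1 : ∀ i, 1 ≤ j i) (a : Fin k) (ha : (a : ℕ) < k - 1 ∨ k < j a) :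
    1 ≤ tabRow ι k (-(Pof ι (k - 1) : ℤ)) a (j a) := by
  have := hj.add_one_le_apply h1 a
  unfold tabRow
  rcases ha with ha | ha
  · rcases le_or_gt (j a) (k - 1) with h | h
    · have := Pof_add_le (ι := ι) (h1 a) h
      omega
    · have := Pof_mono (ι := ι) h.le
      omega
  · have := Pof_mono (ι := ι) (show k + 1 ≤ j a by omega)
    omega

lemma IsTabColumn.one_le_tabRow (hPk1 : Pof ι (k + 1) = Pof ι (k - 1) + 1)
    (hj : IsTabColumn n k j) (a : Fin k) : 1 ≤ tabRow ι k (-(Pof ι (k - 1) : ℤ)) a (j a) :=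
  _root_.one_le_tabRow hPk1 hj.1 (fun i => (hj.2.1 i).1) a <|
    (lt_or_eq_of_le (Nat.le_sub_one_of_lt a.isLt)).imp_right (hj.2.2 a)

lemma tabRow_last (hPk : Pof ι k = Pof ι (k - 1)) {b : Fin k} (hb : (b : ℕ) = k - 1) :
    tabRow ι k (-(Pof ι (k - 1) : ℤ)) b k = 0 := by
  have := b.isLt
  simp only [tabRow, hb, hPk]
  omega

end Rows

section Closure

variable {n k : ℕ} {ι : ℕ → ℕ} {lam : ℕ → ℤ} {j : Fin k → ℕ}

lemma ShatA_one_eq_zero (hseq : SeqCond n ι) (hPk : Pof ι k = Pof ι (k - 1)) (hkn : k ≤ n)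
    (hj : StrictMono j) (h1 : ∀ i, 1 ≤ j i) {b : Fin k} (hb : (b : ℕ) = k - 1)
    (hjb : j b = k + 1) (hk : ∀ i, j i ≠ k) :
    ShatA n ι lam 1 k ((lam k : ℚ), tabA n ι j (-(Pof ι (k - 1) : ℤ))) = 0 := by
  have hrow := tabRow_last hPk hb
  have hsucc : update j b k = fun i : Fin k => (i : ℕ) + 1 := by
    refine (hj.update (fun i hi => ?_) fun i hi => ?_).eq_add_one
      ((forall_update_iff j fun _ v => 1 ≤ v).2 ⟨by omega, fun i _ => h1 i⟩)
      ((forall_update_iff j fun _ v => v ≤ k).2 ⟨le_rfl, fun i hib => ?_⟩)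
    · have := hj hi; have := hk i; omega
    · exact absurd (Fin.lt_def.mp hi) (by have := i.isLt; omega)
    · have := hj (lt_of_le_of_ne (Fin.le_def.mpr (by have := i.isLt; omega)) hib)
      have := hk i
      omega
  have hlower := ShatA_lower (lam := lam) hseq hj.injective hjb hk hrow.ge (by omega) hkn
    (lam k : ℚ)
  rw [hrow, zero_add, if_pos rfl, hsucc, tabA_succ, hPk, neg_add_cancel,
    XT_of_not_one_le (by omega)] at hlower
  rw [hlower, add_neg_cancel]
  rfl

lemma ShatA_mem_TabAk_union (hseq : SeqCond n ι) (hPk : Pof ι k = Pof ι (k - 1))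
    (hPk1 : Pof ι (k + 1) = Pof ι (k - 1) + 1) (hkn : k ≤ n) (hj : IsTabColumn n k j)
    {m : ℤ} {c : ℕ} (hm : 1 ≤ m) (hc1 : 1 ≤ c) (hcn : c ≤ n) :
    ShatA n ι lam m c ((lam k : ℚ), tabA n ι j (-(Pof ι (k - 1) : ℤ)))
      ∈ TabAk n ι lam k ∪ {0} := by
  rcases tabA_apply_eq_zero_or (n := n) (ι := ι) hj.1 hm hc1 hcn (-(Pof ι (k - 1) : ℤ)) with
    h0 | ⟨a, ha, hc, rfl⟩ | ⟨b, hb, hc, rfl⟩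
  · rw [ShatA_of_apply_eq_zero h0]
    exact Or.inl (mem_TabAk.2 ⟨j, hj, rfl⟩)
  · rw [ShatA_raise hseq hj.1.injective ha hc hm hc1 hcn]
    exact Or.inl (mem_TabAk.2 ⟨_, hj.update_succ ha hc hcn, rfl⟩)
  · by_cases hpos : (b : ℕ) < k - 1 ∨ k < c
    · have hj' := hj.update_pred hb hc hc1 fun h => hpos.resolve_left (by omega)
      have hrow := hj'.one_le_tabRow hPk1 b
      rw [update_self] at hrow
      rw [ShatA_lower hseq hj.1.injective hb hc (by omega) hc1 hcn, if_neg (by omega), add_zero]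
      exact Or.inl (mem_TabAk.2 ⟨_, hj', rfl⟩)
    · have hb' : (b : ℕ) = k - 1 := by have := b.isLt; omega
      obtain rfl : c = k := by have := hj.2.2 b hb'; omega
      rw [tabRow_last hPk hb', zero_add,
        ShatA_one_eq_zero hseq hPk hkn hj.1 (fun i => (hj.2.1 i).1) hb' hb hc]
      exact Or.inr rfl

end Closure

section Orbit

variable {n k : ℕ} {ι : ℕ → ℕ} {lam : ℕ → ℤ}

lemma lamTabA_mem_XiTabk : lamTabA n ι lam k ∈ XiTabk n ι lam k :=
  ⟨[], by simp, rfl⟩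

lemma ShatA_mem_XiTabk {φ : AffF} (hφ : φ ∈ XiTabk n ι lam k) {m : ℤ} {c : ℕ} (hm : 1 ≤ m)
    (hc1 : 1 ≤ c) (hcn : c ≤ n) : ShatA n ι lam m c φ ∈ XiTabk n ι lam k := by
  obtain ⟨L, hL, rfl⟩ := hφ
  exact ⟨(m, c) :: L, List.forall_mem_cons.2 ⟨⟨hm, hc1, hcn⟩, hL⟩, rfl⟩

lemma XiTabk_subset {S : Set AffF} (hlam : lamTabA n ι lam k ∈ S)
    (hS : ∀ φ ∈ S, ∀ (m : ℤ) (c : ℕ), 1 ≤ m → 1 ≤ c → c ≤ n → ShatA n ι lam m c φ ∈ S) :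
    XiTabk n ι lam k ⊆ S := by
  rintro _ ⟨L, hL, rfl⟩
  induction L with
  | nil => exact hlam
  | cons q L ih =>
    obtain ⟨⟨hm, hc1, hcn⟩, hL⟩ := List.forall_mem_cons.1 hL
    exact hS _ (ih hL) q.1 q.2 hm hc1 hcn

lemma mk_mem_XiTabk (hseq : SeqCond n ι) (hPk1 : Pof ι (k + 1) = Pof ι (k - 1) + 1)
    {j : Fin k → ℕ} (hj : IsTabColumn n k j) :
    ((lam k : ℚ), tabA n ι j (-(Pof ι (k - 1) : ℤ))) ∈ XiTabk n ι lam k := by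
  induction hsum : ∑ i, j i using Nat.strong_induction_on generalizing j with
  | _ N ih =>
    by_cases hne : j = lamCol k
    · subst hne
      exact lamTabA_mem_XiTabk
    obtain ⟨a, ha2, hj'⟩ := hj.exists_update_pred hne
    have hlt : ∑ i, update j a (j a - 1) i < N := hsum ▸ Finset.sum_lt_sum
      (fun i _ => by by_cases h : i = a <;> simp [h]) ⟨a, Finset.mem_univ a, by simp; omega⟩
    have hrow := hj'.one_le_tabRow hPk1 a
    rw [update_self] at hrow
    have hnot : ∀ i, update j a (j a - 1) i ≠ j a - 1 + 1 :=
      (forall_update_iff j fun _ v => v ≠ j a - 1 + 1).2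
        ⟨by omega, fun i hi h => hi (hj.1.injective (by omega))⟩
    have hraise := ShatA_raise (lam := lam) hseq hj'.1.injective (update_self a _ j) hnot hrow
      (by omega) (by have := (hj.2.1 a).2; omega) (lam k : ℚ)
    rw [update_idem, Nat.sub_add_cancel (by omega), update_eq_self] at hraise
    rw [← hraise]
    exact ShatA_mem_XiTabk (ih _ hlt hj' rfl) hrow (by omega) (by have := (hj.2.1 a).2; omega)

lemma lamTabA_mem_TabAk (hkn : k ≤ n) : lamTabA n ι lam k ∈ TabAk n ι lam k :=
  mem_TabAk.2 ⟨_, isTabColumn_lamCol hkn, rfl⟩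

lemma zero_mem_XiTabk (hseq : SeqCond n ι) (hPk : Pof ι k = Pof ι (k - 1)) (hk1 : 1 ≤ k)
    (hkn : k ≤ n) : (0 : AffF) ∈ XiTabk n ι lam k := by
  rw [← ShatA_one_eq_zero hseq hPk hkn lamCol_strictMono one_le_lamCol
    (b := ⟨k - 1, by omega⟩) rfl (by simp [lamCol]) fun i => by unfold lamCol; split_ifs <;> omega]
  exact ShatA_mem_XiTabk lamTabA_mem_XiTabk le_rfl hk1 hkn

end Orbit

theorem XiTabk_eq_TabAk_general (n : ℕ) (ι : ℕ → ℕ) (lam : ℕ → ℤ)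
    (hseq : SeqCond n ι)
    (k : ℕ) (hk1 : 1 < k) (hkn : k < n)
    (h1 : firstOcc ι (k + 1) < firstOcc ι k)
    (h2 : firstOcc ι (k - 1) < firstOcc ι k) :
    (∀ φ ∈ TabAk n ι lam k ∪ {(((0 : ℚ), (0 : LinF)) : AffF)},
      ∀ m : ℤ, ∀ jj : ℕ, 1 ≤ m → 1 ≤ jj → jj ≤ n →
        ShatA n ι lam m jj φ ∈ TabAk n ι lam k ∪ {(((0 : ℚ), (0 : LinF)) : AffF)}) ∧
    (∀ φ ∈ TabAk n ι lam k,
      ∃ L : List (ℤ × ℕ), (∀ q ∈ L, 1 ≤ q.1 ∧ 1 ≤ q.2 ∧ q.2 ≤ n) ∧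
        φ = L.foldr (fun q ψ => ShatA n ι lam q.1 q.2 ψ) (lamTabA n ι lam k)) ∧
    XiTabk n ι lam k = TabAk n ι lam k ∪ {(((0 : ℚ), (0 : LinF)) : AffF)} := by
  have hPk := Pof_eq_Pof_sub_one hseq hk1 hkn.le h2
  have hPk1 : Pof ι (k + 1) = Pof ι (k - 1) + 1 := by
    rw [Pof_succ (by omega), pOf_eq_one_of_firstOcc_lt hseq (by omega) hkn h1, hPk]
  have hclosed : ∀ φ ∈ TabAk n ι lam k ∪ {0}, ∀ (m : ℤ) (c : ℕ), 1 ≤ m → 1 ≤ c → c ≤ n →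
      ShatA n ι lam m c φ ∈ TabAk n ι lam k ∪ {0} := by
    rintro φ (hφ | rfl) m c hm hc1 hcn
    · obtain ⟨j, hj, rfl⟩ := mem_TabAk.1 hφ
      exact ShatA_mem_TabAk_union hseq hPk hPk1 hkn.le hj hm hc1 hcn
    · exact Or.inr (ShatA_of_apply_eq_zero rfl)
  have hreach : TabAk n ι lam k ⊆ XiTabk n ι lam k := fun φ hφ => by
    obtain ⟨j, hj, rfl⟩ := mem_TabAk.1 hφ
    exact mk_mem_XiTabk hseq hPk1 hj
  exact ⟨hclosed, hreach, (XiTabk_subset (Or.inl (lamTabA_mem_TabAk hkn.le)) hclosed).antisymm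
    (Set.union_subset hreach (Set.singleton_subset_iff.2 (zero_mem_XiTabk hseq hPk hk1.le hkn.le)))⟩

/-- Type `A_n`, `ι` adapted, `1 < k < n` with `ι⁽ᵏ⁾ > ι⁽ᵏ⁺¹⁾` and `ι⁽ᵏ⁾ > ι⁽ᵏ⁻¹⁾`.
Then `Tab_{A,ι,k}[λ] ∪ {0}` is closed under all operators `Ŝ_{m,j}`, every element of
`Tab_{A,ι,k}[λ]` is obtained from `λ⁽ᵏ⁾` by a finite sequence of the `Ŝ_{m,j}`, and
hence `Ξ_{ι,k}[λ] = Tab_{A,ι,k}[λ] ∪ {0}`. -/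
theorem XiTabk_eq_TabAk (n : ℕ) (ι : ℕ → ℕ) (lam : ℕ → ℤ)
    (hseq : SeqCond n ι) (had : AdaptedA n ι) (hdom : ∀ i, 0 ≤ lam i)
    (k : ℕ) (hk1 : 1 < k) (hkn : k < n)
    (h1 : firstOcc ι (k + 1) < firstOcc ι k)
    (h2 : firstOcc ι (k - 1) < firstOcc ι k) :
    (∀ φ ∈ TabAk n ι lam k ∪ {(((0 : ℚ), (0 : LinF)) : AffF)},
      ∀ m : ℤ, ∀ jj : ℕ, 1 ≤ m → 1 ≤ jj → jj ≤ n →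
        ShatA n ι lam m jj φ ∈ TabAk n ι lam k ∪ {(((0 : ℚ), (0 : LinF)) : AffF)}) ∧
    (∀ φ ∈ TabAk n ι lam k,
      ∃ L : List (ℤ × ℕ), (∀ q ∈ L, 1 ≤ q.1 ∧ 1 ≤ q.2 ∧ q.2 ≤ n) ∧
        φ = L.foldr (fun q ψ => ShatA n ι lam q.1 q.2 ψ) (lamTabA n ι lam k)) ∧
    XiTabk n ι lam k = TabAk n ι lam k ∪ {(((0 : ℚ), (0 : LinF)) : AffF)} :=
  XiTabk_eq_TabAk_general n ι lam hseq k hk1 hkn h1 h2
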